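/- arXiv:1811.12472 — 2 statements merged into one kernel-verified Lean document; each statement's English description precedes it below -/
import Mathlib

section
/- Let d ≥ 1 and let f : ℝᵈ → ℝᵈ be a C¹ diffeomorphism (f is a bijection and both f and f^{-1} are continuously differentiable). Let p ∈ ℝᵈ be a fixed point of f with |det(Df(p))| > 1, where Df(p) is the derivative of f at p. Then for every compact set K ⊆ ℝᵈ, the set of points x ∈ ℝᵈ such that fⁿ(x) ∈ K for all n ≥ 0 and the empirical measures e_n(x) := (1/n)·∑_{i=0}^{n-1} δ_{f^i(x)} converge weakly to the Dirac measure δ_p (i.e. (1/n)·∑_{i=0}^{n-1} g(f^i(x)) → g(p) for every bounded continuous g : ℝᵈ → ℝ) has Lebesgue measure zero. In particular, δ_p is not a physical measure of f restricted to orbits remaining in a compact set. -/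
open MeasureTheory Filter Topology

/-!
The Jacobian `|det D(fⁿ)(x)|` is the product of `|det Df|` along the orbit of `x`, i.e. the
exponential of the Birkhoff sum of `log |det Df|`. Testing the empirical measures of a point of
the set against a bounded continuous function equal to `log |det Df|` on `K ∪ {p}` shows that
these Birkhoff averages tend to `log |det Df(p)| > 0`, so the Jacobian blows up along the orbit.
On the other hand, by the change of variables formula, the integral of `|det D(fⁿ)|` over the set
is the volume of its image under `fⁿ`, which lies in `K`; Fatou's lemma then forces the set to
be null.
-/

section

variable {𝕜 E : Type*} [NontriviallyNormedField 𝕜] [NormedAddCommGroup E] [NormedSpace 𝕜 E]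

theorem ContinuousLinearMap.det_comp (A B : E →L[𝕜] E) : (A.comp B).det = A.det * B.det :=
  LinearMap.det_comp (A : E →ₗ[𝕜] E) B

theorem det_fderiv_ne_zero_of_leftInverse {f g : E → E} {x : E} (hgf : Function.LeftInverse g f)
    (hf : DifferentiableAt 𝕜 f x) (hg : DifferentiableAt 𝕜 g (f x)) :
    (fderiv 𝕜 f x).det ≠ 0 := by
  have hid : (fderiv 𝕜 g (f x)).comp (fderiv 𝕜 f x) = ContinuousLinearMap.id 𝕜 E := by
    rw [← fderiv_comp x hg hf, hgf.comp_eq_id, fderiv_id]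
  have h1 : (fderiv 𝕜 g (f x)).det * (fderiv 𝕜 f x).det = 1 := by
    rw [← ContinuousLinearMap.det_comp, hid]
    exact LinearMap.det_id
  exact right_ne_zero_of_mul_eq_one h1

theorem det_fderiv_iterate {f : E → E} (hf : Differentiable 𝕜 f) (n : ℕ) (x : E) :
    (fderiv 𝕜 f^[n] x).det = ∏ i ∈ Finset.range n, (fderiv 𝕜 f (f^[i] x)).det := by
  induction n generalizing x with
  | zero =>
    rw [Function.iterate_zero, fderiv_id, Finset.prod_range_zero]
    exact LinearMap.det_id
  | succ n ih =>
    rw [Function.iterate_succ, fderiv_comp x ((hf.iterate n) (f x)) (hf x),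
      ContinuousLinearMap.det_comp, ih, Finset.prod_range_succ']
    simp only [Function.iterate_succ_apply, Function.iterate_zero_apply]

end

theorem tendsto_prod_range_atTop_of_tendsto_average_log {a : ℕ → ℝ} {c : ℝ} (ha : ∀ i, 0 < a i)
    (hc : 0 < c)
    (h : Tendsto (fun n : ℕ => (n : ℝ)⁻¹ * ∑ i ∈ Finset.range n, Real.log (a i)) atTop (𝓝 c)) :
    Tendsto (fun n => ∏ i ∈ Finset.range n, a i) atTop atTop := by
  have hsum : Tendsto (fun n : ℕ => ∑ i ∈ Finset.range n, Real.log (a i)) atTop atTop := by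
    refine (tendsto_natCast_atTop_atTop.atTop_mul_pos hc h).congr' ?_
    filter_upwards [eventually_ne_atTop 0] with n hn
    rw [← mul_assoc, mul_inv_cancel₀ (Nat.cast_ne_zero.2 hn), one_mul]
  refine (Real.tendsto_exp_atTop.comp hsum).congr fun n => ?_
  simp only [Function.comp_apply, Real.exp_sum, Real.exp_log (ha _)]

theorem IsCompact.exists_bounded_continuous_eqOn {X : Type*} [TopologicalSpace X] {K : Set X}
    (hK : IsCompact K) {h : X → ℝ} (hh : Continuous h) :
    ∃ g : X → ℝ, Continuous g ∧ (∃ C : ℝ, ∀ y, |g y| ≤ C) ∧ Set.EqOn g h K := by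
  obtain ⟨C, hC⟩ := hK.exists_bound_of_continuousOn hh.continuousOn
  have hC0 : -|C| ≤ |C| := neg_le_self (abs_nonneg C)
  refine ⟨fun y => Set.projIcc (-|C|) |C| hC0 (h y), continuous_subtype_val.comp
    (continuous_projIcc.comp hh), ⟨|C|, fun y => abs_le.2 (Set.projIcc _ _ hC0 (h y)).2⟩, ?_⟩
  intro y hy
  exact congrArg Subtype.val
    (Set.projIcc_of_mem hC0 (abs_le.1 ((hC y hy).trans (le_abs_self C))))

theorem addHaar_setOf_tendsto_abs_det_fderiv_atTop_eq_zero {E : Type*} [NormedAddCommGroup E]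
    [NormedSpace ℝ E] [FiniteDimensional ℝ E] [MeasurableSpace E] [BorelSpace E]
    (μ : Measure E) [μ.IsAddHaarMeasure] {φ : ℕ → E → E} (hφ : ∀ n, Differentiable ℝ (φ n))
    (hinj : ∀ n, Function.Injective (φ n)) {K : Set E} (hK : MeasurableSet K) (hKμ : μ K ≠ ⊤) :
    μ {x | (∀ n, φ n x ∈ K) ∧ Tendsto (fun n => |(fderiv ℝ (φ n) x).det|) atTop atTop} = 0 := by
  set S := {x | (∀ n, φ n x ∈ K) ∧ Tendsto (fun n => |(fderiv ℝ (φ n) x).det|) atTop atTop}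
  have hJ : ∀ n, Measurable fun x => |(fderiv ℝ (φ n) x).det| := fun n =>
    (continuous_abs.comp ContinuousLinearMap.continuous_det).measurable.comp
      (measurable_fderiv ℝ (φ n))
  have hS : MeasurableSet S := by
    have horbit : MeasurableSet {x | ∀ n, φ n x ∈ K} := by
      simpa only [Set.preimage, Set.iInter_ofPred] using
        MeasurableSet.iInter fun n => (hφ n).continuous.measurable hK
    exact horbit.inter (measurableSet_tendsto (l := atTop) atTop hJ)
  have himage : ∀ n, ∫⁻ x in S, ENNReal.ofReal |(fderiv ℝ (φ n) x).det| ∂μ ≤ μ K := fun n =>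
    (lintegral_abs_det_fderiv_le_addHaar_image μ hS
      (fun x _ => ((hφ n) x).hasFDerivAt.hasFDerivWithinAt) (hinj n).injOn).trans
      (measure_mono (Set.image_subset_iff.2 fun x hx => hx.1 n))
  by_contra hpos
  have hfatou := lintegral_liminf_le (μ := μ.restrict S) (u := atTop)
    (f := fun n x => ENNReal.ofReal |(fderiv ℝ (φ n) x).det|)
    fun n => ENNReal.measurable_ofReal.comp (hJ n)
  have hdiv : ∀ x ∈ S, liminf (fun n => ENNReal.ofReal |(fderiv ℝ (φ n) x).det|) atTop = ⊤ :=
    fun x hx => (ENNReal.tendsto_ofReal_atTop.comp hx.2).liminf_eq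
  have hliminf : ∫⁻ x in S, liminf (fun n => ENNReal.ofReal |(fderiv ℝ (φ n) x).det|) atTop ∂μ
      = ⊤ := by
    rw [setLIntegral_congr_fun hS hdiv, setLIntegral_const, ENNReal.top_mul hpos]
  refine hKμ (top_unique ?_)
  calc ⊤ = _ := hliminf.symm
    _ ≤ _ := hfatou
    _ ≤ liminf (fun _ => μ K) atTop := liminf_le_liminf (Eventually.of_forall himage)
    _ = μ K := liminf_const _

theorem dirac_not_physical_of_det_gt_one_general
    (d : ℕ)
    (f finv : (Fin d → ℝ) → (Fin d → ℝ))
    (hleft : Function.LeftInverse finv f)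
    (hf : ContDiff ℝ 1 f) (hfinv : ContDiff ℝ 1 finv)
    (p : Fin d → ℝ)
    (hdet : 1 < |LinearMap.det (↑(fderiv ℝ f p) : (Fin d → ℝ) →ₗ[ℝ] (Fin d → ℝ))|)
    (K : Set (Fin d → ℝ)) (hK : IsCompact K) :
    volume {x : Fin d → ℝ | (∀ n : ℕ, f^[n] x ∈ K) ∧
      ∀ g : (Fin d → ℝ) → ℝ, Continuous g → (∃ C : ℝ, ∀ y, |g y| ≤ C) →
        Tendsto (fun n : ℕ => (n : ℝ)⁻¹ * ∑ i ∈ Finset.range n, g (f^[i] x))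
          atTop (𝓝 (g p))} = 0 := by
  have hfd : Differentiable ℝ f := hf.differentiable one_ne_zero
  have hdet_ne (y) : (fderiv ℝ f y).det ≠ 0 :=
    det_fderiv_ne_zero_of_leftInverse hleft (hfd y) (hfinv.differentiable one_ne_zero _)
  have hlogJ : Continuous fun y => Real.log |(fderiv ℝ f y).det| :=
    (continuous_abs.comp (ContinuousLinearMap.continuous_det.comp
      (hf.continuous_fderiv one_ne_zero))).log fun y => abs_ne_zero.2 (hdet_ne y)
  obtain ⟨g, hg, hg_bdd, hg_eq⟩ :=
    (hK.union (isCompact_singleton (x := p))).exists_bounded_continuous_eqOn hlogJ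
  refine measure_mono_null ?_ (addHaar_setOf_tendsto_abs_det_fderiv_atTop_eq_zero volume
    hfd.iterate hleft.injective.iterate hK.measurableSet hK.measure_lt_top.ne)
  rintro x ⟨horbit, hbirkhoff⟩
  refine ⟨horbit, ?_⟩
  simp only [det_fderiv_iterate hfd, Finset.abs_prod]
  refine tendsto_prod_range_atTop_of_tendsto_average_log (fun i => abs_pos.2 (hdet_ne _))
    (Real.log_pos hdet) ?_
  convert hbirkhoff g hg hg_bdd using 3 with n
  · exact Finset.sum_congr rfl fun i _ => (hg_eq (Or.inl (horbit i))).symm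
  · exact (hg_eq (Or.inr rfl)).symm

/-- Let `f : ℝᵈ → ℝᵈ` be a `C¹` diffeomorphism (with `C¹` inverse `finv`),
and `p` a fixed point with `|det Df(p)| > 1`. Then for every compact set `K`, the set of
points `x` whose forward orbit stays in `K` and whose empirical measures converge weakly to
the Dirac measure `δ_p` (tested against bounded continuous functions) has Lebesgue measure
zero. In particular `δ_p` is not a physical measure on orbits remaining in a compact set. -/
theorem dirac_not_physical_of_det_gt_one
    (d : ℕ) (hd : 1 ≤ d)
    (f finv : (Fin d → ℝ) → (Fin d → ℝ))
    (hleft : Function.LeftInverse finv f) (hright : Function.RightInverse finv f)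
    (hf : ContDiff ℝ 1 f) (hfinv : ContDiff ℝ 1 finv)
    (p : Fin d → ℝ) (hp : f p = p)
    (hdet : 1 < |LinearMap.det (↑(fderiv ℝ f p) : (Fin d → ℝ) →ₗ[ℝ] (Fin d → ℝ))|)
    (K : Set (Fin d → ℝ)) (hK : IsCompact K) :
    volume {x : Fin d → ℝ | (∀ n : ℕ, f^[n] x ∈ K) ∧
      ∀ g : (Fin d → ℝ) → ℝ, Continuous g → (∃ C : ℝ, ∀ y, |g y| ≤ C) →
        Tendsto (fun n : ℕ => (n : ℝ)⁻¹ * ∑ i ∈ Finset.range n, g (f^[i] x))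
          atTop (𝓝 (g p))} = 0 :=
  dirac_not_physical_of_det_gt_one_general d f finv hleft hf hfinv p hdet K hK
end

section
/- Let X be a compact metric space and φ : ℝ × X → X a continuous flow (φ(0,·) = id and φ(s+t,·) = φ(s, φ(t, ·)) for all s,t ∈ ℝ). Fix t₀ > 0. Let ν be a Borel probability measure on X invariant under the time-t₀ map (i.e. (φ_{t₀})_*ν = ν, where φ_{t₀} := φ(t₀,·)), and define the Borel probability measure μ by μ(A) := (1/t₀)·∫₀^{t₀} ν(φ_s^{-1}(A)) ds for every Borel set A ⊆ X. If μ is ergodic for the map φ_{t₀}, then (φ_s)_*ν = μ for every s ∈ ℝ; in particular ν = μ. -/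
/-!
Write `T = φ_{t₀}` and `ρ_I = ∫_I (φ_s)_* ν ds` for a set of times `I`. Since `T` commutes with
the flow and preserves `ν`, every `ρ_I` is `T`-invariant, and the hypothesis on `μ` says
`μ = ρ_{(0,t₀]} / t₀`. For `I ⊆ (0,t₀]` we have `ρ_I ≤ ρ_{(0,t₀]} ≪ μ`, and an invariant measure
absolutely continuous with respect to an ergodic one is a multiple of it, so `ρ_I = |I| μ`.
Testing against a bounded continuous `f`, the continuous `t₀`-periodic function
`s ↦ ∫ f ∘ φ_s dν` has the same integral as the constant `∫ f dμ` over every `I ⊆ (0,t₀]`,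
hence is that constant.
-/

open MeasureTheory Set Function BoundedContinuousFunction
open scoped ENNReal

theorem ergodic_of_measure_eq_zero_or_one {X : Type*} [MeasurableSpace X] {μ : Measure X}
    [IsProbabilityMeasure μ] {T : X → X} (hT : MeasurePreserving T μ μ)
    (h : ∀ A, MeasurableSet A → T ⁻¹' A = A → μ A = 0 ∨ μ A = 1) : Ergodic T μ := by
  refine ⟨hT, ⟨fun A hA hTA => Filter.eventuallyConst_set'.mpr ?_⟩⟩
  rcases h A hA hTA with h0 | h1
  · exact Or.inl (ae_eq_empty.mpr h0)
  · exact Or.inr ((ae_eq_univ_iff_measure_eq hA.nullMeasurableSet).mpr (by simp [h1]))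

theorem Ergodic.eq_measure_univ_smul_of_absolutelyContinuous {X : Type*} [MeasurableSpace X]
    {μ ρ : Measure X} {T : X → X} [IsProbabilityMeasure μ] [IsFiniteMeasure ρ]
    (hμ : Ergodic T μ) (hρ : MeasurePreserving T ρ ρ) (hρμ : ρ ≪ μ) : ρ = ρ univ • μ := by
  obtain ⟨c, rfl⟩ := hμ.eq_smul_of_absolutelyContinuous hρ hρμ
  simp

theorem Function.Periodic.eq_of_ae_restrict_Ioc_eq {Y : Type*} [TopologicalSpace Y] [T2Space Y]
    {g : ℝ → Y} {c : ℝ} {a : Y} (hper : Periodic g c) (hc : 0 < c) (hg : Continuous g)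
    (hae : ∀ᵐ s ∂volume.restrict (Ioc 0 c), g s = a) (s : ℝ) : g s = a := by
  obtain ⟨y, hy, hsy⟩ := hper.exists_mem_Ioc hc s 0
  rw [hsy]
  exact Measure.eqOn_Ioc_of_ae_eq volume hae hg.continuousOn continuousOn_const
    (by simpa using hy)

theorem comm_of_add {X : Type*} {φ : ℝ → X → X} (hadd : ∀ s t x, φ (s + t) x = φ s (φ t x))
    (s t : ℝ) (x : X) : φ t (φ s x) = φ s (φ t x) := by
  rw [← hadd, ← hadd, add_comm]

section FlowIntegral

variable {X : Type*} [MeasurableSpace X] {φ : ℝ → X → X} {ν : Measure X} {I J : Set ℝ}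

/-- The measure `∫_{s ∈ I} (φ_s)_* ν ds`. -/
noncomputable def flowIntegral (φ : ℝ → X → X) (ν : Measure X) (I : Set ℝ) : Measure X :=
  ((volume.restrict I).prod ν).map (uncurry φ)

theorem flowIntegral_apply [SFinite ν] (hφ : Measurable (uncurry φ)) {A : Set X}
    (hA : MeasurableSet A) : flowIntegral φ ν I A = ∫⁻ s in I, ν (φ s ⁻¹' A) := by
  rw [flowIntegral, Measure.map_apply hφ hA, Measure.prod_apply (hφ hA)]
  rfl

theorem flowIntegral_univ [IsProbabilityMeasure ν] (hφ : Measurable (uncurry φ)) :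
    flowIntegral φ ν I univ = volume I := by
  rw [flowIntegral_apply hφ MeasurableSet.univ]
  simp

theorem flowIntegral_mono [SFinite ν] (hφ : Measurable (uncurry φ)) (hIJ : I ⊆ J) :
    flowIntegral φ ν I ≤ flowIntegral φ ν J :=
  Measure.map_mono (Measure.prod_mono (Measure.restrict_mono hIJ le_rfl) le_rfl) hφ

theorem isFiniteMeasure_flowIntegral [IsFiniteMeasure ν] (hI : volume I ≠ ∞) :
    IsFiniteMeasure (flowIntegral φ ν I) :=
  have : IsFiniteMeasure (volume.restrict I) := isFiniteMeasure_restrict.mpr hI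
  inferInstanceAs (IsFiniteMeasure (Measure.map _ _))

theorem measurePreserving_flowIntegral [SFinite ν] (hφ : Measurable (uncurry φ)) {T : X → X}
    (hT : MeasurePreserving T ν ν) (hcomm : ∀ s x, T (φ s x) = φ s (T x)) :
    MeasurePreserving T (flowIntegral φ ν I) (flowIntegral φ ν I) := by
  refine ⟨hT.measurable, ?_⟩
  have hswap : T ∘ uncurry φ = uncurry φ ∘ Prod.map id T := funext fun p => hcomm p.1 p.2
  rw [flowIntegral, Measure.map_map hT.measurable hφ, hswap,
    ← Measure.map_map hφ (measurable_id.prodMap hT.measurable),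
    ← Measure.map_prod_map _ _ measurable_id hT.measurable, Measure.map_id, hT.map_eq]

theorem flowIntegral_eq_smul_of_ergodic [IsProbabilityMeasure ν] {μ : Measure X}
    [IsProbabilityMeasure μ] (hφ : Measurable (uncurry φ)) {T : X → X}
    (hT : MeasurePreserving T ν ν) (hcomm : ∀ s x, T (φ s x) = φ s (T x)) (hμ : Ergodic T μ)
    (hJμ : flowIntegral φ ν J ≪ μ) (hIJ : I ⊆ J) (hI : volume I ≠ ∞) :
    flowIntegral φ ν I = volume I • μ := by
  have := isFiniteMeasure_flowIntegral (φ := φ) (ν := ν) hI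
  have h := hμ.eq_measure_univ_smul_of_absolutelyContinuous
    (measurePreserving_flowIntegral hφ hT hcomm)
    ((Measure.absolutelyContinuous_of_le (flowIntegral_mono hφ hIJ)).trans hJμ)
  rwa [flowIntegral_univ hφ] at h

variable [TopologicalSpace X] [OpensMeasurableSpace X]

theorem integral_flowIntegral [IsFiniteMeasure ν] (hφ : Measurable (uncurry φ))
    (hI : volume I ≠ ∞) (f : X →ᵇ ℝ) :
    ∫ x, f x ∂flowIntegral φ ν I = ∫ s in I, ∫ x, f (φ s x) ∂ν := by
  have : IsFiniteMeasure (volume.restrict I) := isFiniteMeasure_restrict.mpr hI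
  rw [flowIntegral, integral_map hφ.aemeasurable f.continuous.aestronglyMeasurable]
  exact integral_prod _ (.of_bound (C := ‖f‖) (f.continuous.measurable.comp hφ).aestronglyMeasurable
    (ae_of_all _ fun _ => f.norm_coe_le_norm _))

theorem continuous_integral_comp_flow [IsFiniteMeasure ν] (hφ : Continuous (uncurry φ))
    (f : X →ᵇ ℝ) : Continuous fun s => ∫ x, f (φ s x) ∂ν :=
  continuous_of_dominated
    (fun s => (f.continuous.comp (hφ.comp (Continuous.prodMk_right s))).aestronglyMeasurable)
    (fun _ => ae_of_all _ fun _ => f.norm_coe_le_norm _) (integrable_const ‖f‖)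
    (ae_of_all _ fun x => f.continuous.comp (hφ.comp (Continuous.prodMk_left x)))

end FlowIntegral

section Ergodic

variable {X : Type*} [MeasurableSpace X] [TopologicalSpace X] [BorelSpace X] {φ : ℝ → X → X}
  {ν μ : Measure X} [IsProbabilityMeasure ν] [IsProbabilityMeasure μ]

theorem ae_integral_comp_flow_eq_of_ergodic (hφ : Continuous (uncurry φ)) {T : X → X}
    (hT : MeasurePreserving T ν ν) (hcomm : ∀ s x, T (φ s x) = φ s (T x)) (hμ : Ergodic T μ)
    {J : Set ℝ} (hJμ : flowIntegral φ ν J ≪ μ) (hJ : volume J ≠ ∞) (f : X →ᵇ ℝ) :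
    ∀ᵐ s ∂volume.restrict J, ∫ x, f (φ s x) ∂ν = ∫ x, f x ∂μ := by
  have : IsFiniteMeasure (volume.restrict J) := isFiniteMeasure_restrict.mpr hJ
  have hint : Integrable (fun s => ∫ x, f (φ s x) ∂ν) (volume.restrict J) :=
    .of_bound (C := ‖f‖) (continuous_integral_comp_flow hφ f).aestronglyMeasurable
      (ae_of_all _ fun _ => by
        simpa using norm_integral_le_of_norm_le_const (ae_of_all ν fun _ => f.norm_coe_le_norm _))
  refine ae_eq_of_forall_setIntegral_eq_of_sigmaFinite (fun _ _ _ => hint.integrableOn)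
    (fun _ _ _ => (integrable_const _).integrableOn) fun I hI _ => ?_
  have hIJ : volume (I ∩ J) ≠ ∞ := (measure_lt_top_of_subset inter_subset_right hJ).ne
  rw [Measure.restrict_restrict hI, ← integral_flowIntegral hφ.measurable hIJ,
    flowIntegral_eq_smul_of_ergodic hφ.measurable hT hcomm hμ hJμ inter_subset_right hIJ,
    integral_smul_measure, setIntegral_const]
  rfl

theorem integral_comp_flow_eq_of_ergodic (hφ : Continuous (uncurry φ))
    (hadd : ∀ s t x, φ (s + t) x = φ s (φ t x)) {t₀ : ℝ} (ht₀ : 0 < t₀)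
    (hν : MeasurePreserving (φ t₀) ν ν) (hμ : Ergodic (φ t₀) μ)
    (hJμ : flowIntegral φ ν (Ioc 0 t₀) ≪ μ) (f : X →ᵇ ℝ) (s : ℝ) :
    ∫ x, f (φ s x) ∂ν = ∫ x, f x ∂μ := by
  have hper : Periodic (fun s => ∫ x, f (φ s x) ∂ν) t₀ := fun s => by
    have hg : Continuous fun x => f (φ s x) := f.continuous.comp (hφ.comp (.prodMk_right s))
    simp only [hadd]
    rw [← integral_map hν.measurable.aemeasurable hg.aestronglyMeasurable, hν.map_eq]
  exact hper.eq_of_ae_restrict_Ioc_eq ht₀ (continuous_integral_comp_flow hφ f)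
    (ae_integral_comp_flow_eq_of_ergodic hφ hν (comm_of_add hadd · t₀) hμ hJμ (by simp) f) s

end Ergodic

theorem flow_average_ergodic_unique_general
    {X : Type*} [MetricSpace X] [MeasurableSpace X] [BorelSpace X]
    (φ : ℝ → X → X) (hφcont : Continuous fun p : ℝ × X => φ p.1 p.2)
    (h0 : ∀ x, φ 0 x = x) (hadd : ∀ s t : ℝ, ∀ x, φ (s + t) x = φ s (φ t x))
    (t₀ : ℝ) (ht₀ : 0 < t₀)
    (ν : Measure X) [IsProbabilityMeasure ν]
    (hν : Measure.map (φ t₀) ν = ν)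
    (μ : Measure X) [IsProbabilityMeasure μ]
    (hμ : ∀ A : Set X, MeasurableSet A →
      μ A = ENNReal.ofReal (1 / t₀) * ∫⁻ s in Set.Ioc (0 : ℝ) t₀, ν (φ s ⁻¹' A))
    (herg : ∀ A : Set X, MeasurableSet A → φ t₀ ⁻¹' A = A → μ A = 0 ∨ μ A = 1) :
    (∀ s : ℝ, Measure.map (φ s) ν = μ) ∧ ν = μ := by
  have hφ : Continuous (uncurry φ) := hφcont
  have hφs (s : ℝ) : Measurable (φ s) := (hφ.comp (.prodMk_right s)).measurable
  have hT : MeasurePreserving (φ t₀) ν ν := ⟨hφs t₀, hν⟩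
  have hμJ : μ = ENNReal.ofReal (1 / t₀) • flowIntegral φ ν (Ioc 0 t₀) := by
    ext A hA
    rw [hμ A hA, Measure.smul_apply, flowIntegral_apply hφ.measurable hA, smul_eq_mul]
  have hμT : Ergodic (φ t₀) μ := by
    refine ergodic_of_measure_eq_zero_or_one ?_ herg
    rw [hμJ]
    exact (measurePreserving_flowIntegral hφ.measurable hT (comm_of_add hadd · t₀)).smul_measure _
  have hJμ : flowIntegral φ ν (Ioc 0 t₀) ≪ μ := by
    rw [hμJ]
    exact Measure.absolutelyContinuous_smul (by simpa using ht₀)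
  have hmap (s : ℝ) : ν.map (φ s) = μ := by
    have := Measure.isProbabilityMeasure_map (μ := ν) (hφs s).aemeasurable
    refine ext_of_forall_integral_eq_of_IsFiniteMeasure fun f => ?_
    rw [integral_map (hφs s).aemeasurable f.continuous.aestronglyMeasurable]
    exact integral_comp_flow_eq_of_ergodic hφ hadd ht₀ hT hμT hJμ f s
  refine ⟨hmap, ?_⟩
  simpa [funext h0] using hmap 0

/-- Let `φ` be a continuous flow on a compact metric space `X`, `t₀ > 0`,
`ν` a Borel probability measure invariant under the time-`t₀` map, and `μ` the Borel
probability measure `μ(A) = (1/t₀) ∫₀^{t₀} ν(φ_s⁻¹ A) ds`. If `μ` is ergodic for the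
time-`t₀` map (every Borel set `A` with `φ_{t₀}⁻¹ A = A` has `μ A ∈ {0,1}`), then
`(φ_s)_* ν = μ` for every `s ∈ ℝ`; in particular `ν = μ`. -/
theorem flow_average_ergodic_unique
    {X : Type*} [MetricSpace X] [CompactSpace X] [MeasurableSpace X] [BorelSpace X]
    (φ : ℝ → X → X) (hφcont : Continuous fun p : ℝ × X => φ p.1 p.2)
    (h0 : ∀ x, φ 0 x = x) (hadd : ∀ s t : ℝ, ∀ x, φ (s + t) x = φ s (φ t x))
    (t₀ : ℝ) (ht₀ : 0 < t₀)
    (ν : Measure X) [IsProbabilityMeasure ν]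
    (hν : Measure.map (φ t₀) ν = ν)
    (μ : Measure X) [IsProbabilityMeasure μ]
    (hμ : ∀ A : Set X, MeasurableSet A →
      μ A = ENNReal.ofReal (1 / t₀) * ∫⁻ s in Set.Ioc (0 : ℝ) t₀, ν (φ s ⁻¹' A))
    (herg : ∀ A : Set X, MeasurableSet A → φ t₀ ⁻¹' A = A → μ A = 0 ∨ μ A = 1) :
    (∀ s : ℝ, Measure.map (φ s) ν = μ) ∧ ν = μ :=
  flow_average_ergodic_unique_general φ hφcont h0 hadd t₀ ht₀ ν hν μ hμ herg
end
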